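/- (Lemma 3.1 of the paper.) Let γ be an oriented simple lattice cycle. Then charge_int(γ) = Σ_{v ∈ ℤ²} col(v)·topw(γ,v), where the right-hand sum has only finitely many nonzero terms. -/

import Mathlib

open scoped Classical

/-- An oriented simple lattice cycle in the grid graph on `ℤ²`: a cyclic sequence
`v 0, v 1, …, v (n-1), v n = v 0` (encoded as an `n`-periodic function `ℕ → ℤ × ℤ`),
with `n ≥ 4`, vertices pairwise distinct within one period, and consecutive
vertices at Euclidean distance `1`. -/
structure LatticeCycle where
  n : ℕ
  four_le : 4 ≤ n
  v : ℕ → ℤ × ℤ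
  periodic : ∀ i, v (i + n) = v i
  inj : ∀ i j, i < n → j < n → v i = v j → i = j
  step : ∀ i, v (i + 1) - v i = (1, 0) ∨ v (i + 1) - v i = (-1, 0) ∨
    v (i + 1) - v i = (0, 1) ∨ v (i + 1) - v i = (0, -1)

/-- Inclusion of `ℤ²` into `ℝ²`. -/
def toR (v : ℤ × ℤ) : ℝ × ℝ := ((v.1 : ℝ), (v.2 : ℝ))

/-- The image of a lattice cycle: the union of the closed segments `[vᵢ, vᵢ₊₁] ⊆ ℝ²`. -/
def LatticeCycle.image (γ : LatticeCycle) : Set (ℝ × ℝ) :=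
  ⋃ i ∈ Finset.range γ.n, segment ℝ (toR (γ.v i)) (toR (γ.v (i + 1)))

/-- Signed crossing of the directed edge `u → w` with the rightward horizontal ray
from `p`: an edge from `(a,b)` to `(a,b+1)` contributes `+1`, and an edge from
`(a,b+1)` to `(a,b)` contributes `-1`, whenever `a > p₁` and `b ≤ p₂ < b + 1`. -/
noncomputable def vcross (u w : ℤ × ℤ) (p : ℝ × ℝ) : ℤ :=
  if w = (u.1, u.2 + 1) ∧ p.1 < (u.1 : ℝ) ∧ (u.2 : ℝ) ≤ p.2 ∧ p.2 < (u.2 : ℝ) + 1 then 1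
  else if u = (w.1, w.2 + 1) ∧ p.1 < (w.1 : ℝ) ∧ (w.2 : ℝ) ≤ p.2 ∧ p.2 < (w.2 : ℝ) + 1 then -1
  else 0

/-- The winding number of `γ` around `p`: the signed number of directed vertical
edges of `γ` crossing the rightward horizontal ray from `p`. -/
noncomputable def wind (γ : LatticeCycle) (p : ℝ × ℝ) : ℤ :=
  ∑ i ∈ Finset.range γ.n, vcross (γ.v i) (γ.v (i + 1)) p

/-- `γ` is counterclockwise oriented: `wind(γ,p) ∈ {0,1}` for every `p` off the image. -/
def LatticeCycle.ccw (γ : LatticeCycle) : Prop :=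
  ∀ p : ℝ × ℝ, p ∉ γ.image → wind γ p = 0 ∨ wind γ p = 1

/-- `γ` is clockwise oriented: `wind(γ,p) ∈ {-1,0}` for every `p` off the image. -/
def LatticeCycle.cw (γ : LatticeCycle) : Prop :=
  ∀ p : ℝ × ℝ, p ∉ γ.image → wind γ p = -1 ∨ wind γ p = 0

/-- The point `v + (k/2, l/2)`; for `k, l ∈ {-1, 1}` these are the four points of `N_v`. -/
noncomputable def corner (v : ℤ × ℤ) (k l : ℤ) : ℝ × ℝ :=
  ((v.1 : ℝ) + (k : ℝ) / 2, (v.2 : ℝ) + (l : ℝ) / 2)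

/-- The metric weight of `v` with respect to `γ`:
`(1/4) · Σ_{u ∈ N_v} wind(γ,u)`. -/
noncomputable def metricw (γ : LatticeCycle) (v : ℤ × ℤ) : ℚ :=
  ((wind γ (corner v (-1) (-1)) + wind γ (corner v (-1) 1) +
    wind γ (corner v 1 (-1)) + wind γ (corner v 1 1) : ℤ) : ℚ) / 4

/-- The set of values `{wind(γ,u) : u ∈ N_v}` (each distinct value counted once). -/
noncomputable def windSet (γ : LatticeCycle) (v : ℤ × ℤ) : Finset ℤ :=
  {wind γ (corner v (-1) (-1)), wind γ (corner v (-1) 1),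
   wind γ (corner v 1 (-1)), wind γ (corner v 1 1)}

/-- The topological weight of `v` with respect to `γ`: the arithmetic mean of the
set of values `{wind(γ,u) : u ∈ N_v}`, each distinct value counted once. -/
noncomputable def topw (γ : LatticeCycle) (v : ℤ × ℤ) : ℚ :=
  (∑ k ∈ windSet γ v, (k : ℚ)) / ((windSet γ v).card : ℚ)

/-- The angle of `γ` at the vertex of index `i`: with `d_in = vᵢ - vᵢ₋₁` and
`d_out = vᵢ₊₁ - vᵢ`, it is `0` if `d_out = d_in`, `1/4` if `d_out` is `d_in`
rotated by 90° counterclockwise, `-1/4` if rotated by 90° clockwise. -/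
noncomputable def angleAt (γ : LatticeCycle) (i : ℕ) : ℚ :=
  let din := γ.v (i + γ.n) - γ.v (i + γ.n - 1)
  let dout := γ.v (i + 1) - γ.v i
  if dout = din then 0
  else if dout = (-din.2, din.1) then 1/4
  else if dout = (din.2, -din.1) then -1/4
  else 0

/-- `v` is a vertex of `γ`. -/
def LatticeCycle.isVertex (γ : LatticeCycle) (v : ℤ × ℤ) : Prop :=
  ∃ i, i < γ.n ∧ γ.v i = v

/-- The angle of `γ` at a point `v ∈ ℤ²`: the angle at the (unique) index of `v`
if `v` is a vertex of `γ`, and `0` otherwise. -/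
noncomputable def angle (γ : LatticeCycle) (v : ℤ × ℤ) : ℚ :=
  if h : γ.isVertex v then angleAt γ h.choose else 0

/-- The color of a lattice point: `1` if `x + y` is odd, `-1` if `x + y` is even. -/
def col (v : ℤ × ℤ) : ℤ := if Even (v.1 + v.2) then -1 else 1

/-- The enclosed charge `charge_int(γ) = Σ_{v ∈ ℤ², v ∉ image γ} col(v)·wind(γ,v)`. -/
noncomputable def chargeInt (γ : LatticeCycle) : ℤ :=
  ∑ᶠ v : ℤ × ℤ, if toR v ∉ γ.image then col v * wind γ (toR v) else 0

/-- The boundary charge `charge_∂(γ) = Σ_{v vertex of γ} angle(γ,v)·col(v)`. -/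
noncomputable def chargeBd (γ : LatticeCycle) : ℚ :=
  ∑ i ∈ Finset.range γ.n, angle γ (γ.v i) * (col (γ.v i) : ℚ)

/-!
Write `W z = wind γ (toR z)`: by the half-open convention it is the winding number of the open
unit cell with lower-left corner `z`, and the four points of `N_z` lie in the cells
`z - (1,1)`, `z - (1,0)`, `z - (0,1)` and `z`. Passing from a cell to a neighbouring one changes
`W` by the net number of traversals by `γ` of the grid edge between them. Hence at a lattice point
off `γ` the four values agree and `topw = wind`, so the two sides differ by the sum of
`col v · topw v` over the vertices of `γ`. At a vertex, the two edges of `γ` split the four cells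
into two blocks whose values differ by one, so `topw` is the mean over the two cells flanking
either edge of `γ` at that vertex. Thus `topw` agrees at consecutive vertices while `col`
alternates: shifting the index by one negates the vertex sum, which therefore vanishes.
-/

theorem Finset.sum_range_comp_succ_of_eq {M : Type*} [AddCancelCommMonoid M] (f : ℕ → M) {n : ℕ}
    (h : f n = f 0) : ∑ i ∈ Finset.range n, f (i + 1) = ∑ i ∈ Finset.range n, f i := by
  have := Finset.sum_range_succ f n
  rw [Finset.sum_range_succ', h] at this
  exact add_right_cancel this

theorem floor_intCast_one_div_two : ⌊((1 : ℤ) : ℝ) / 2⌋ = 0 := by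
  norm_num [Int.floor_eq_iff]

theorem floor_intCast_neg_one_div_two : ⌊((-1 : ℤ) : ℝ) / 2⌋ = -1 := by
  norm_num [Int.floor_eq_iff]

def IsUnitStep (d : ℤ × ℤ) : Prop :=
  d = (1, 0) ∨ d = (-1, 0) ∨ d = (0, 1) ∨ d = (0, -1)

theorem IsUnitStep.neg {d : ℤ × ℤ} (h : IsUnitStep d) : IsUnitStep (-d) := by
  rcases h with rfl | rfl | rfl | rfl <;> simp [IsUnitStep]

theorem eq_or_eq_of_toR_mem_segment {u w z : ℤ × ℤ} (hd : IsUnitStep (w - u))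
    (hz : toR z ∈ segment ℝ (toR u) (toR w)) : z = u ∨ z = w := by
  rw [segment_eq_image'] at hz
  obtain ⟨t, ⟨ht₀, ht₁⟩, h⟩ := hz
  set d := w - u
  have hw : w = u + d := by simp [d]
  have hunit : (d.1 : ℝ) * d.1 + d.2 * d.2 = 1 := by rcases hd with h | h | h | h <;> simp [h]
  have h₁ : (z.1 : ℝ) = u.1 + t * d.1 := by simpa [toR, d] using (congrArg Prod.fst h).symm
  have h₂ : (z.2 : ℝ) = u.2 + t * d.2 := by simpa [toR, d] using (congrArg Prod.snd h).symm
  -- `t` is the integer `⟪z - u, d⟫`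
  obtain ⟨m, rfl⟩ : ∃ m : ℤ, t = m := ⟨d.1 * (z.1 - u.1) + d.2 * (z.2 - u.2), by
    push_cast
    rw [h₁, h₂]
    linear_combination (-t) * hunit⟩
  have hm : m = 0 ∨ m = 1 := by
    have : 0 ≤ m := by exact_mod_cast ht₀
    have : m ≤ 1 := by exact_mod_cast ht₁
    omega
  have e₁ : z.1 = u.1 + m * d.1 := by exact_mod_cast h₁
  have e₂ : z.2 = u.2 + m * d.2 := by exact_mod_cast h₂
  rcases hm with rfl | rfl
  · exact Or.inl (Prod.ext (by simpa using e₁) (by simpa using e₂))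
  · exact Or.inr (hw ▸ Prod.ext (by simpa using e₁) (by simpa using e₂))

theorem vcross_toR (u w z : ℤ × ℤ) :
    vcross u w (toR z) =
      if w = (u.1, u.2 + 1) ∧ z.1 < u.1 ∧ z.2 = u.2 then 1
      else if u = (w.1, w.2 + 1) ∧ z.1 < w.1 ∧ z.2 = w.2 then -1 else 0 := by
  simp only [vcross, toR, ← Int.floor_lt, ← Int.floor_eq_iff, Int.floor_intCast]

theorem vcross_eq_vcross_floor (u w : ℤ × ℤ) (p : ℝ × ℝ) :
    vcross u w p = vcross u w (toR (⌊p.1⌋, ⌊p.2⌋)) := by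
  rw [vcross_toR]
  simp only [vcross, ← Int.floor_lt, ← Int.floor_eq_iff]

theorem wind_eq_wind_floor (γ : LatticeCycle) (p : ℝ × ℝ) :
    wind γ p = wind γ (toR (⌊p.1⌋, ⌊p.2⌋)) :=
  Finset.sum_congr rfl fun _ _ => vcross_eq_vcross_floor _ _ _

theorem wind_corner (γ : LatticeCycle) (z : ℤ × ℤ) (k l : ℤ) :
    wind γ (corner z k l) = wind γ (toR (z + (⌊(k : ℝ) / 2⌋, ⌊(l : ℝ) / 2⌋))) := by
  rw [wind_eq_wind_floor]
  simp only [corner, Int.floor_intCast_add]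
  rfl

theorem wind_corner_one_one (γ : LatticeCycle) (z : ℤ × ℤ) :
    wind γ (corner z 1 1) = wind γ (toR z) := by
  simp only [wind_corner, floor_intCast_one_div_two, Prod.mk_zero_zero, add_zero]

namespace LatticeCycle

variable (γ : LatticeCycle)

theorem n_pos : 0 < γ.n := by
  have := γ.four_le
  omega

theorem periodic_v : Function.Periodic γ.v γ.n := γ.periodic

theorem v_n : γ.v γ.n = γ.v 0 := by
  simpa using γ.periodic 0

variable {γ} in
theorem v_eq_v_iff {j k : ℕ} : γ.v j = γ.v k ↔ j ≡ k [MOD γ.n] := by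
  rw [← γ.periodic_v.map_mod_nat j, ← γ.periodic_v.map_mod_nat k]
  exact ⟨γ.inj _ _ (Nat.mod_lt _ γ.n_pos) (Nat.mod_lt _ γ.n_pos), congrArg γ.v⟩

theorem isVertex_v (k : ℕ) : γ.isVertex (γ.v k) :=
  ⟨k % γ.n, Nat.mod_lt _ γ.n_pos, γ.periodic_v.map_mod_nat k⟩

theorem sum_range_sub_comp_v {M : Type*} [AddCommGroup M] (φ : ℤ × ℤ → M) :
    ∑ i ∈ Finset.range γ.n, (φ (γ.v (i + 1)) - φ (γ.v i)) = 0 := by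
  rw [Finset.sum_range_sub (fun i => φ (γ.v i)), γ.v_n, sub_self]

def vertices : Finset (ℤ × ℤ) := (Finset.range γ.n).image γ.v

theorem mem_vertices {z : ℤ × ℤ} : z ∈ γ.vertices ↔ γ.isVertex z := by
  simp [vertices, isVertex]

theorem support_ite_isVertex_subset {M : Type*} [Zero M] (f : ℤ × ℤ → M) :
    Function.support (fun z => if γ.isVertex z then f z else 0) ⊆ γ.vertices :=
  fun _ hz => γ.mem_vertices.2 (by_contra fun h => hz (if_neg h))

theorem toR_mem_image_iff {z : ℤ × ℤ} : toR z ∈ γ.image ↔ γ.isVertex z := by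
  simp only [LatticeCycle.image, Set.mem_iUnion, Finset.mem_range, exists_prop]
  constructor
  · rintro ⟨i, -, hi⟩
    rcases eq_or_eq_of_toR_mem_segment (γ.step i) hi with rfl | rfl <;> exact γ.isVertex_v _
  · rintro ⟨i, hi, rfl⟩
    exact ⟨i, hi, left_mem_segment ℝ _ _⟩

def flow (p q : ℤ × ℤ) : ℤ :=
  ∑ i ∈ Finset.range γ.n,
    ((if γ.v i = p ∧ γ.v (i + 1) = q then 1 else 0) - if γ.v i = q ∧ γ.v (i + 1) = p then 1 else 0)

theorem flow_swap (p q : ℤ × ℤ) : γ.flow q p = -γ.flow p q := by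
  simp only [flow, ← Finset.sum_neg_distrib, neg_sub]

theorem flow_v (i : ℕ) (q : ℤ × ℤ) :
    γ.flow (γ.v i) q =
      (if γ.v (i + 1) = q then 1 else 0) - if γ.v (i + (γ.n - 1)) = q then 1 else 0 := by
  have hn := γ.n_pos
  have hi : i % γ.n ∈ Finset.range γ.n := Finset.mem_range.2 (Nat.mod_lt _ hn)
  have hmod : i % γ.n ≡ i [MOD γ.n] := Nat.mod_modEq i γ.n
  have only_i : ∀ j ∈ Finset.range γ.n, γ.v j = γ.v i → j = i % γ.n := fun j hj h =>
    (v_eq_v_iff.1 h |>.trans hmod.symm).eq_of_lt_of_lt (Finset.mem_range.1 hj)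
      (Finset.mem_range.1 hi)
  -- index the incoming edges by their endpoint
  set F : ℕ → ℤ := fun k => if γ.v (k + (γ.n - 1)) = q ∧ γ.v k = γ.v i then 1 else 0
  have hF : ∀ j, (if γ.v j = q ∧ γ.v (j + 1) = γ.v i then 1 else 0) = F (j + 1) := fun j => by
    simp only [F, show j + 1 + (γ.n - 1) = j + γ.n by omega, γ.periodic]
  have hFn : F γ.n = F 0 := by
    simp only [F, show γ.n + (γ.n - 1) = γ.n - 1 + γ.n by omega, γ.periodic, γ.v_n, zero_add]
  rw [flow, Finset.sum_sub_distrib]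
  congr 1
  · rw [Finset.sum_eq_single_of_mem _ hi fun j hj hji => if_neg fun h => hji (only_i j hj h.1)]
    simp [v_eq_v_iff.2 hmod, v_eq_v_iff.2 (hmod.add_right 1)]
  · simp_rw [hF]
    rw [Finset.sum_range_comp_succ_of_eq F hFn,
      Finset.sum_eq_single_of_mem _ hi fun j hj hji => if_neg fun h => hji (only_i j hj h.2)]
    simp [v_eq_v_iff.2 hmod, v_eq_v_iff.2 (hmod.add_right (γ.n - 1))]

theorem flow_eq_zero_of_not_isVertex {z : ℤ × ℤ} (hz : ¬γ.isVertex z) (q : ℤ × ℤ) :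
    γ.flow z q = 0 := by
  refine Finset.sum_eq_zero fun j _ => ?_
  have h₁ : γ.v j ≠ z := fun h => hz (h ▸ γ.isVertex_v j)
  have h₂ : γ.v (j + 1) ≠ z := fun h => hz (h ▸ γ.isVertex_v (j + 1))
  simp [h₁, h₂]

theorem wind_toR_add_neg_one_zero (z : ℤ × ℤ) :
    wind γ (toR (z + (-1, 0))) = wind γ (toR z) + γ.flow z (z + (0, 1)) := by
  simp only [wind, flow, ← Finset.sum_add_distrib]
  refine Finset.sum_congr rfl fun i _ => ?_
  simp only [vcross_toR, Prod.ext_iff, Prod.fst_add, Prod.snd_add]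
  split_ifs <;> omega

theorem wind_toR_add_zero_neg_one (z : ℤ × ℤ) :
    wind γ (toR (z + (0, -1))) = wind γ (toR z) - γ.flow z (z + (1, 0)) := by
  -- on each edge, the crossings of the lower ray minus those of the ray from `z`, plus the
  -- traversals of the edge from `z` to `z + (1, 0)`, are the change of `onRay`: they telescope
  let onRay : ℤ × ℤ → ℤ := fun q => if z.1 < q.1 ∧ q.2 = z.2 then 1 else 0
  have step : ∀ i, vcross (γ.v i) (γ.v (i + 1)) (toR (z + (0, -1))) -
      vcross (γ.v i) (γ.v (i + 1)) (toR z) +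
      ((if γ.v i = z ∧ γ.v (i + 1) = z + (1, 0) then 1 else 0) -
        if γ.v i = z + (1, 0) ∧ γ.v (i + 1) = z then 1 else 0) =
      onRay (γ.v (i + 1)) - onRay (γ.v i) := fun i => by
    simp only [onRay, vcross_toR]
    rcases γ.step i with h | h | h | h <;>
      · simp only [Prod.ext_iff, Prod.fst_add, Prod.snd_add, Prod.fst_sub, Prod.snd_sub] at h ⊢
        split_ifs <;> omega
  have := Finset.sum_congr rfl fun i (_ : i ∈ Finset.range γ.n) => step i
  rw [γ.sum_range_sub_comp_v, Finset.sum_add_distrib, Finset.sum_sub_distrib] at this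
  simp only [wind, flow]
  linarith

theorem wind_corner_neg_one_one (z : ℤ × ℤ) :
    wind γ (corner z (-1) 1) = wind γ (corner z 1 1) + γ.flow z (z + (0, 1)) := by
  simp only [wind_corner, floor_intCast_one_div_two, floor_intCast_neg_one_div_two,
    Prod.mk_zero_zero, add_zero, γ.wind_toR_add_neg_one_zero]

theorem wind_corner_one_neg_one (z : ℤ × ℤ) :
    wind γ (corner z 1 (-1)) = wind γ (corner z 1 1) - γ.flow z (z + (1, 0)) := by
  simp only [wind_corner, floor_intCast_one_div_two, floor_intCast_neg_one_div_two,
    Prod.mk_zero_zero, add_zero, γ.wind_toR_add_zero_neg_one]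

theorem wind_corner_neg_one_neg_one (z : ℤ × ℤ) :
    wind γ (corner z (-1) (-1)) = wind γ (corner z 1 (-1)) - γ.flow z (z + (0, -1)) := by
  have h := γ.wind_toR_add_neg_one_zero (z + (0, -1))
  simp only [add_assoc, Prod.mk_add_mk] at h
  norm_num at h
  simp only [wind_corner, floor_intCast_one_div_two, floor_intCast_neg_one_div_two, h,
    Prod.mk_zero_zero, add_zero]
  rw [γ.flow_swap]
  ring

theorem wind_toR_eq_zero_of_forall_lt {z : ℤ × ℤ} (hz : ∀ i, z.1 < (γ.v i).1) :
    wind γ (toR z) = 0 := by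
  -- every vertical edge crossing the ray leaves or enters the half-plane above it
  let above : ℤ × ℤ → ℤ := fun q => if z.2 < q.2 then 1 else 0
  have step : ∀ i, vcross (γ.v i) (γ.v (i + 1)) (toR z) = above (γ.v (i + 1)) - above (γ.v i) :=
    fun i => by
      have h₁ := hz i
      have h₂ := hz (i + 1)
      simp only [above, vcross_toR]
      rcases γ.step i with h | h | h | h <;>
        · simp only [Prod.ext_iff, Prod.fst_sub, Prod.snd_sub] at h ⊢
          split_ifs <;> omega
  rw [wind, Finset.sum_congr rfl fun i _ => step i, γ.sum_range_sub_comp_v]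

theorem wind_toR_eq_zero_of_notMem_Icc {L U : ℤ × ℤ} (hv : ∀ i, γ.v i ∈ Set.Icc L U)
    {z : ℤ × ℤ} (hz : z ∉ Set.Icc L U) : wind γ (toR z) = 0 := by
  simp only [Set.mem_Icc, Prod.le_def] at hv hz
  by_cases hleft : z.1 < L.1
  · exact γ.wind_toR_eq_zero_of_forall_lt fun i => hleft.trans_le (hv i).1.1
  refine Finset.sum_eq_zero fun i _ => ?_
  have h₁ := hv i
  have h₂ := hv (i + 1)
  rw [vcross_toR]
  simp only [Prod.ext_iff]
  split_ifs <;> omega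

theorem finite_support_wind_toR : (Function.support fun z => wind γ (toR z)).Finite := by
  obtain ⟨L, hL⟩ := γ.vertices.bddBelow
  obtain ⟨U, hU⟩ := γ.vertices.bddAbove
  have hv : ∀ i, γ.v i ∈ Set.Icc L U := fun i =>
    have h : γ.v i ∈ (γ.vertices : Set (ℤ × ℤ)) := γ.mem_vertices.2 (γ.isVertex_v i)
    ⟨hL h, hU h⟩
  refine (Set.finite_Icc L U).subset fun z hz => ?_
  by_contra h
  exact hz (γ.wind_toR_eq_zero_of_notMem_Icc hv h)

/-- For `q = p + d`, the centres of the two unit cells on either side of the edge from `p` to `q`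
are `corner p (d₁ - d₂) (d₁ + d₂)` and `corner p (d₁ + d₂) (d₂ - d₁)`. -/
noncomputable def edgeMean (p q : ℤ × ℤ) : ℚ :=
  ((wind γ (corner p ((q - p).1 - (q - p).2) ((q - p).1 + (q - p).2)) : ℚ) +
    wind γ (corner p ((q - p).1 + (q - p).2) ((q - p).2 - (q - p).1))) / 2

theorem edgeMean_comm (p q : ℤ × ℤ) : γ.edgeMean q p = γ.edgeMean p q := by
  have h₁ : corner q ((p - q).1 - (p - q).2) ((p - q).1 + (p - q).2) =
      corner p ((q - p).1 + (q - p).2) ((q - p).2 - (q - p).1) := by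
    simp only [corner, Prod.fst_sub, Prod.snd_sub, Prod.mk.injEq]
    push_cast
    constructor <;> ring
  have h₂ : corner q ((p - q).1 + (p - q).2) ((p - q).2 - (p - q).1) =
      corner p ((q - p).1 - (q - p).2) ((q - p).1 + (q - p).2) := by
    simp only [corner, Prod.fst_sub, Prod.snd_sub, Prod.mk.injEq]
    push_cast
    constructor <;> ring
  rw [edgeMean, edgeMean, h₁, h₂, add_comm]

theorem topw_eq_of_mem_windSet_iff {z : ℤ × ℤ} {x y : ℤ} (hxy : x ≠ y)
    (h : ∀ k, k ∈ windSet γ z ↔ k = x ∨ k = y) : topw γ z = ((x : ℚ) + y) / 2 := by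
  have hset : windSet γ z = {x, y} := by
    ext k
    simp [h]
  rw [topw, hset, Finset.sum_pair hxy, Finset.card_pair hxy]
  norm_num

theorem topw_eq_wind_of_not_isVertex {z : ℤ × ℤ} (hz : ¬γ.isVertex z) :
    topw γ z = wind γ (toR z) := by
  have hU := γ.wind_corner_neg_one_one z
  have hR := γ.wind_corner_one_neg_one z
  have hD := γ.wind_corner_neg_one_neg_one z
  simp only [γ.flow_eq_zero_of_not_isVertex hz, add_zero, sub_zero] at hU hR hD
  rw [topw, windSet, hD, hU, hR, ← wind_corner_one_one]
  simp

/-- Here `z` is a vertex entered from `z + c` and left towards `z + b`. -/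
theorem topw_eq_edgeMean {z b c : ℤ × ℤ} (hb : IsUnitStep b) (hc : IsUnitStep c) (hbc : b ≠ c)
    (hflow : ∀ e, γ.flow z (z + e) = (if e = b then 1 else 0) - if e = c then 1 else 0) :
    topw γ z = γ.edgeMean z (z + b) ∧ topw γ z = γ.edgeMean z (z + c) := by
  have hU := γ.wind_corner_neg_one_one z
  have hR := γ.wind_corner_one_neg_one z
  have hD := γ.wind_corner_neg_one_neg_one z
  simp only [hflow] at hU hR hD
  -- a check of the twelve pairs `(b, c)`
  rcases hb with rfl | rfl | rfl | rfl <;> rcases hc with rfl | rfl | rfl | rfl <;>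
    norm_num at hbc <;> simp only [edgeMean, add_sub_cancel_left] <;> norm_num at hU hR hD ⊢
  all_goals
    constructor <;> refine γ.topw_eq_of_mem_windSet_iff (by omega) fun k => ?_ <;>
      simp only [windSet, Finset.mem_insert, Finset.mem_singleton] <;> omega

theorem topw_v_eq_edgeMean (i : ℕ) :
    topw γ (γ.v i) = γ.edgeMean (γ.v i) (γ.v (i + 1)) ∧
      topw γ (γ.v i) = γ.edgeMean (γ.v i) (γ.v (i + (γ.n - 1))) := by
  have hn := γ.four_le
  have hb : IsUnitStep (γ.v (i + 1) - γ.v i) := γ.step i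
  have hc : IsUnitStep (γ.v (i + (γ.n - 1)) - γ.v i) := by
    have h := IsUnitStep.neg (γ.step (i + (γ.n - 1)))
    rwa [show i + (γ.n - 1) + 1 = i + γ.n by omega, γ.periodic, neg_sub] at h
  have hbc : γ.v (i + 1) - γ.v i ≠ γ.v (i + (γ.n - 1)) - γ.v i := by
    rw [Ne, sub_left_inj, v_eq_v_iff]
    intro h
    have := (Nat.ModEq.add_left_cancel' i h).eq_of_lt_of_lt (by omega) (by omega)
    omega
  have hflow : ∀ e, γ.flow (γ.v i) (γ.v i + e) =
      (if e = γ.v (i + 1) - γ.v i then 1 else 0) -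
        if e = γ.v (i + (γ.n - 1)) - γ.v i then 1 else 0 := fun e => by
    simp only [flow_v, eq_sub_iff_add_eq', eq_comm]
  simpa using γ.topw_eq_edgeMean hb hc hbc hflow

theorem topw_v_succ (i : ℕ) : topw γ (γ.v (i + 1)) = topw γ (γ.v i) := by
  have hn := γ.four_le
  rw [(γ.topw_v_eq_edgeMean (i + 1)).2, show i + 1 + (γ.n - 1) = i + γ.n by omega, γ.periodic,
    edgeMean_comm, (γ.topw_v_eq_edgeMean i).1]

theorem col_v_succ (i : ℕ) : col (γ.v (i + 1)) = -col (γ.v i) := by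
  rcases γ.step i with h | h | h | h <;>
    · simp only [Prod.ext_iff, Prod.fst_sub, Prod.snd_sub] at h
      simp only [col, Int.even_iff]
      split_ifs <;> omega

theorem sum_col_mul_topw_v_eq_zero :
    ∑ i ∈ Finset.range γ.n, (col (γ.v i) : ℚ) * topw γ (γ.v i) = 0 := by
  -- shifting the index by one negates every term
  have hshift : ∑ i ∈ Finset.range γ.n, (col (γ.v (i + 1)) : ℚ) * topw γ (γ.v (i + 1)) =
      ∑ i ∈ Finset.range γ.n, (col (γ.v i) : ℚ) * topw γ (γ.v i) :=
    Finset.sum_range_comp_succ_of_eq (fun i => (col (γ.v i) : ℚ) * topw γ (γ.v i)) (by rw [γ.v_n])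
  simp only [col_v_succ, topw_v_succ, Int.cast_neg, neg_mul, Finset.sum_neg_distrib] at hshift
  linarith

theorem finsum_ite_isVertex_col_mul_topw_eq_zero :
    ∑ᶠ z, (if γ.isVertex z then (col z : ℚ) * topw γ z else 0) = 0 := by
  rw [finsum_eq_sum_of_support_subset _ (γ.support_ite_isVertex_subset _), vertices,
    Finset.sum_image fun i hi j hj h =>
      γ.inj i j (Finset.mem_range.1 hi) (Finset.mem_range.1 hj) h]
  simp only [γ.isVertex_v, if_true, sum_col_mul_topw_v_eq_zero]

theorem col_mul_topw_eq_add (z : ℤ × ℤ) :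
    (col z : ℚ) * topw γ z =
      ((if toR z ∉ γ.image then col z * wind γ (toR z) else 0 : ℤ) : ℚ) +
        if γ.isVertex z then (col z : ℚ) * topw γ z else 0 := by
  by_cases hz : γ.isVertex z
  · simp [hz, γ.toR_mem_image_iff]
  · simp [hz, γ.toR_mem_image_iff, γ.topw_eq_wind_of_not_isVertex hz]

end LatticeCycle

/-- Lemma 3.1: `charge_int(γ) = Σ_{v ∈ ℤ²} col(v)·topw(γ,v)`,
the right-hand sum having only finitely many nonzero terms. -/
theorem chargeInt_eq_sum_col_topw (γ : LatticeCycle) :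
    (Function.support (fun v : ℤ × ℤ => (col v : ℚ) * topw γ v)).Finite ∧
    (chargeInt γ : ℚ) = ∑ᶠ v : ℤ × ℤ, (col v : ℚ) * topw γ v := by
  have hint : (Function.support fun z : ℤ × ℤ =>
      if toR z ∉ γ.image then col z * wind γ (toR z) else 0).Finite :=
    γ.finite_support_wind_toR.subset fun z hz h => hz (by simp [h])
  have hint' : (Function.support fun z : ℤ × ℤ =>
      ((if toR z ∉ γ.image then col z * wind γ (toR z) else 0 : ℤ) : ℚ)).Finite :=
    hint.subset (Function.support_comp_subset Int.cast_zero _)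
  have hvert := γ.vertices.finite_toSet.subset
    (γ.support_ite_isVertex_subset fun z => (col z : ℚ) * topw γ z)
  rw [funext γ.col_mul_topw_eq_add]
  refine ⟨(hint'.union hvert).subset (Function.support_add _ _), ?_⟩
  rw [finsum_add_distrib hint' hvert, γ.finsum_ite_isVertex_col_mul_topw_eq_zero, add_zero,
    chargeInt]
  simpa only [eq_intCast] using map_finsum (Int.castRingHom ℚ) hint
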